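/- arXiv:2404.03614 — 4 statements merged into one kernel-verified Lean document; each statement's English description precedes it below -/
import Mathlib

section
/- Generic composition rule for forward simulations (rule comp): Assume the execution relation red is execution-composable. Suppose sim(R, R', S1, F1, γ, γ') and sim(R', R'', S2, F2, γ', γ'') hold, and suppose the success and failure predicates S : S_src → S_src → Prop and F : S_src → Prop satisfy: (i) for all τ, τ'', if S(τ, τ'') then there exists τ' with S1(τ, τ') and S2(τ', τ''); and (ii) for all τ, if F(τ) then F1(τ), or there exists τ' with S1(τ, τ') and F2(τ'). Then sim(R, R'', S, F, γ, γ'') holds. -/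
def Sim {S B P : Type*} (red : P → B → P → Option B → Prop)
    (Rin Rout : S → B → Prop) (Succ : S → S → Prop) (Fail : S → Prop)
    (γin γout : P) : Prop :=
  ∀ τ σ, Rin τ σ →
    ((∀ τ', Succ τ τ' → ∃ σ', red γin σ γout (some σ') ∧ Rout τ' σ') ∧
     (Fail τ → ∃ γ', red γin σ γ' none))

def ExecComposable {B P : Type*} (red : P → B → P → Option B → Prop) : Prop :=
  ∀ γ σ γ' σ' γ'' r, red γ σ γ' (some σ') → red γ' σ' γ'' r → red γ σ γ'' r

namespace Sim

variable {S B P : Type*} {red : P → B → P → Option B → Prop} {Rin Rout : S → B → Prop}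
  {Succ : S → S → Prop} {Fail : S → Prop} {γin γout : P} {τ τ' : S} {σ : B}

theorem exists_red_some (h : Sim red Rin Rout Succ Fail γin γout) (hR : Rin τ σ)
    (hSucc : Succ τ τ') : ∃ σ', red γin σ γout (some σ') ∧ Rout τ' σ' :=
  (h τ σ hR).1 τ' hSucc

theorem exists_red_none (h : Sim red Rin Rout Succ Fail γin γout) (hR : Rin τ σ)
    (hFail : Fail τ) : ∃ γ', red γin σ γ' none :=
  (h τ σ hR).2 hFail

end Sim

/-- Rule comp: generic composition of forward simulations. -/
theorem comp_rule {S B P : Type*} (red : P → B → P → Option B → Prop)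
    (hred : ExecComposable red)
    (R R' R'' : S → B → Prop) (S1 S2 : S → S → Prop) (F1 F2 : S → Prop)
    (γ γ' γ'' : P)
    (h1 : Sim red R R' S1 F1 γ γ')
    (h2 : Sim red R' R'' S2 F2 γ' γ'')
    (Sc : S → S → Prop) (Fc : S → Prop)
    (hS : ∀ τ τ'', Sc τ τ'' → ∃ τ', S1 τ τ' ∧ S2 τ' τ'')
    (hF : ∀ τ, Fc τ → F1 τ ∨ ∃ τ', S1 τ τ' ∧ F2 τ') :
    Sim red R R'' Sc Fc γ γ'' := by
  intro τ σ hR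
  refine ⟨fun τ'' hSc => ?_, fun hFc => ?_⟩
  · obtain ⟨τ', hS1, hS2⟩ := hS τ τ'' hSc
    obtain ⟨σ', hred1, hR'⟩ := h1.exists_red_some hR hS1
    obtain ⟨σ'', hred2, hR''⟩ := h2.exists_red_some hR' hS2
    exact ⟨σ'', hred _ _ _ _ _ _ hred1 hred2, hR''⟩
  · rcases hF τ hFc with hF1 | ⟨τ', hS1, hF2⟩
    · exact h1.exists_red_none hR hF1
    · obtain ⟨σ', hred1, hR'⟩ := h1.exists_red_some hR hS1
      obtain ⟨γfail, hred2⟩ := h2.exists_red_none hR' hF2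
      exact ⟨γfail, hred _ _ _ _ _ _ hred1 hred2⟩
end

section
/- Boogie propagation rule (rule bprop): Assume the execution relation red is execution-composable. Define bSim(R, R', γ, γ') := sim(R, R', (fun τ τ' => τ = τ'), (fun _ => False), γ, γ'). If bSim(R, R1, γ, γ1), sim(R1, R2, S, F, γ1, γ2), and bSim(R2, R', γ2, γ') all hold, then sim(R, R', S, F, γ, γ') holds. -/
/-- Simulation in which the source state stays unchanged and no failure occurs. -/
def BSim {S B P : Type*} (red : P → B → P → Option B → Prop)
    (R R' : S → B → Prop) (γ γ' : P) : Prop :=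
  Sim red R R' (fun τ τ' => τ = τ') (fun _ => False) γ γ'

namespace Sim

variable {S B P : Type*} {red : P → B → P → Option B → Prop}

theorem mono {Rin Rout : S → B → Prop} {Succ Succ' : S → S → Prop} {Fail Fail' : S → Prop}
    {γin γout : P} (h : Sim red Rin Rout Succ Fail γin γout)
    (hSucc : ∀ τ τ', Succ' τ τ' → Succ τ τ') (hFail : ∀ τ, Fail' τ → Fail τ) :
    Sim red Rin Rout Succ' Fail' γin γout := fun τ σ hR =>
  ⟨fun τ' hτ' => (h τ σ hR).1 τ' (hSucc τ τ' hτ'), fun hτ => (h τ σ hR).2 (hFail τ hτ)⟩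

theorem seq (hred : ExecComposable red) {R R₁ R₂ : S → B → Prop} {S₁ S₂ : S → S → Prop}
    {F₁ F₂ : S → Prop} {γ γ₁ γ₂ : P}
    (h₁ : Sim red R R₁ S₁ F₁ γ γ₁) (h₂ : Sim red R₁ R₂ S₂ F₂ γ₁ γ₂) :
    Sim red R R₂ (Relation.Comp S₁ S₂) (fun τ => F₁ τ ∨ ∃ τ₁, S₁ τ τ₁ ∧ F₂ τ₁) γ γ₂ := by
  intro τ σ hR
  refine ⟨?succ, ?fail⟩
  case succ =>
    rintro τ₂ ⟨τ₁, hS₁, hS₂⟩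
    obtain ⟨σ₁, hrun₁, hR₁⟩ := (h₁ τ σ hR).1 τ₁ hS₁
    obtain ⟨σ₂, hrun₂, hR₂⟩ := (h₂ τ₁ σ₁ hR₁).1 τ₂ hS₂
    exact ⟨σ₂, hred _ _ _ _ _ _ hrun₁ hrun₂, hR₂⟩
  case fail =>
    rintro (hF₁ | ⟨τ₁, hS₁, hF₂⟩)
    · exact (h₁ τ σ hR).2 hF₁
    · obtain ⟨σ₁, hrun₁, hR₁⟩ := (h₁ τ σ hR).1 τ₁ hS₁
      obtain ⟨γf, hfail⟩ := (h₂ τ₁ σ₁ hR₁).2 hF₂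
      exact ⟨γf, hred _ _ _ _ _ _ hrun₁ hfail⟩

end Sim

/-- Rule bprop: Boogie propagation rule. -/
theorem bprop_rule {S B P : Type*} (red : P → B → P → Option B → Prop)
    (hred : ExecComposable red)
    (R R1 R2 R' : S → B → Prop) (Sc : S → S → Prop) (Fc : S → Prop)
    (γ γ1 γ2 γ' : P)
    (h1 : BSim red R R1 γ γ1)
    (h2 : Sim red R1 R2 Sc Fc γ1 γ2)
    (h3 : BSim red R2 R' γ2 γ') :
    Sim red R R' Sc Fc γ γ' :=
  ((Sim.seq hred h1 h2).seq hred h3).mono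
    (fun τ τ' hSc => ⟨τ', ⟨τ, rfl, hSc⟩, rfl⟩)
    (fun τ hFc => Or.inl (Or.inr ⟨τ, rfl, hFc⟩))
end

section
/- Sequential composition rule (rule seq-sim): Assume the execution relation red is execution-composable. Let s1, s2 be statements and suppose the big-step semantics of their sequential composition seq s1 s2 satisfies: (a) if big (seq s1 s2) τ (some τ'') then there exists τ' with big s1 τ (some τ') and big s2 τ' (some τ''); and (b) if big (seq s1 s2) τ none then big s1 τ none, or there exists τ' with big s1 τ (some τ') and big s2 τ' none. If stmSim(R, R', s1, γ, γ') and stmSim(R', R'', s2, γ', γ'') hold, then stmSim(R, R'', seq s1 s2, γ, γ'') holds. -/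
/-- Forward simulation for source statements. -/
def StmSim {S B P Stmt : Type*} (red : P → B → P → Option B → Prop)
    (big : Stmt → S → Option S → Prop)
    (R R' : S → B → Prop) (s : Stmt) (γ γ' : P) : Prop :=
  Sim red R R' (fun τ τ' => big s τ (some τ')) (fun τ => big s τ none) γ γ'

theorem Sim.comp {S B P : Type*} {red : P → B → P → Option B → Prop}
    (hred : ExecComposable red) {R R' R'' : S → B → Prop}
    {Succ₁ Succ₂ Succ : S → S → Prop} {Fail₁ Fail₂ Fail : S → Prop} {γ γ' γ'' : P}
    (h₁ : Sim red R R' Succ₁ Fail₁ γ γ') (h₂ : Sim red R' R'' Succ₂ Fail₂ γ' γ'')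
    (hSucc : ∀ τ τ'', Succ τ τ'' → ∃ τ', Succ₁ τ τ' ∧ Succ₂ τ' τ'')
    (hFail : ∀ τ, Fail τ → Fail₁ τ ∨ ∃ τ', Succ₁ τ τ' ∧ Fail₂ τ') :
    Sim red R R'' Succ Fail γ γ'' := by
  intro τ σ hR
  refine ⟨fun τ'' hτ'' => ?_, fun hτ => ?_⟩
  · obtain ⟨τ', hτ', hτ''⟩ := hSucc τ τ'' hτ''
    obtain ⟨σ', hσ', hR'⟩ := (h₁ τ σ hR).1 τ' hτ'
    obtain ⟨σ'', hσ'', hR''⟩ := (h₂ τ' σ' hR').1 τ'' hτ''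
    exact ⟨σ'', hred _ _ _ _ _ _ hσ' hσ'', hR''⟩
  · rcases hFail τ hτ with hτ₁ | ⟨τ', hτ', hτ₂⟩
    · exact (h₁ τ σ hR).2 hτ₁
    · obtain ⟨σ', hσ', hR'⟩ := (h₁ τ σ hR).1 τ' hτ'
      obtain ⟨γf, hγf⟩ := (h₂ τ' σ' hR').2 hτ₂
      exact ⟨γf, hred _ _ _ _ _ _ hσ' hγf⟩

/-- Rule seq-sim: sequential composition rule. -/
theorem seq_sim_rule {S B P Stmt : Type*} (red : P → B → P → Option B → Prop)
    (hred : ExecComposable red)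
    (big : Stmt → S → Option S → Prop) (seq : Stmt → Stmt → Stmt)
    (s1 s2 : Stmt)
    (hbigS : ∀ τ τ'', big (seq s1 s2) τ (some τ'') →
      ∃ τ', big s1 τ (some τ') ∧ big s2 τ' (some τ''))
    (hbigF : ∀ τ, big (seq s1 s2) τ none →
      big s1 τ none ∨ ∃ τ', big s1 τ (some τ') ∧ big s2 τ' none)
    (R R' R'' : S → B → Prop) (γ γ' γ'' : P)
    (h1 : StmSim red big R R' s1 γ γ')
    (h2 : StmSim red big R' R'' s2 γ' γ'') :
    StmSim red big R R'' (seq s1 s2) γ γ'' := by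
  exact Sim.comp hred h1 h2 hbigS hbigF
end

section
/- Simulation rule for exhale (rule exh-sim): Assume the execution relation red is execution-composable. Let rc : V → V → Option V → Prop be an arbitrary remove-and-check reduction relation on Viper-style states (first argument: expression-evaluation state; second: reduction state; third: outcome), and define the exhale semantics by: exhale succeeds from σ to σ'' iff there exists σ' with rc σ σ (some σ') and nonDet(σ, σ', σ''), and exhale fails from σ iff rc σ σ none. Suppose: (premise 1) the forward simulation over pairs of Viper-style states sim(R1, R', S1, F1, γ, γ') holds, where R1((σ0, σ), σb) := σ0 = σ ∧ R(σ, σb), S1((σ0, σ), (σ1, σ')) := σ0 = σ1 ∧ rc σ0 σ (some σ'), and F1((σ0, σ)) := rc σ0 σ none; and (premise 2) sim(R', R3, S2, (fun _ => False), γ', γ'') holds, where R3((σ0, σ), σb) := R''(σ, σb) and S2((σ0, σ), (τ, σ')) := nonDet(σ0, σ, σ') ∧ rc σ0 σ0 (some σ). Then the forward simulation over single Viper-style states sim(R, R'', exhSucc, exhFail, γ, γ'') holds, where exhSucc(σ, σ'') := ∃ σ', rc σ σ (some σ') ∧ nonDet(σ, σ', σ'') and exhFail(σ) := rc σ σ none.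 -/
/-- A Viper-style state: store, heap, and permission mask. -/
structure VState (Var Loc Val : Type*) where
  store : Var → Val
  heap : Loc → Val
  mask : Loc → ℚ

/-- Nondeterministic heap assignment on locations without permission. -/
def nonDet {Var Loc Val : Type*} (σ σ' σ'' : VState Var Loc Val) : Prop :=
  σ''.store = σ'.store ∧ σ''.mask = σ'.mask ∧
  ∀ l, (σ.mask l = 0 ∨ σ'.mask l > 0) → σ''.heap l = σ'.heap l

/- Exhale is remove-and-check followed by a nondeterministic heap havoc, so the rule is the
sequential composition of the two premises. The source states of the premises are pairs
(σ₀, σ) recording the evaluation state σ₀ that remove-and-check and `nonDet` refer to; exhale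
from σ is recovered by starting from the pair (σ, σ). -/

namespace Sim

variable {S S' B P : Type*} {red : P → B → P → Option B → Prop}

theorem comp_s4 (hred : ExecComposable red) {Rin Rmid Rout : S → B → Prop}
    {Succ₁ Succ₂ : S → S → Prop} {Fail₁ Fail₂ : S → Prop} {γ γ' γ'' : P}
    (h₁ : Sim red Rin Rmid Succ₁ Fail₁ γ γ') (h₂ : Sim red Rmid Rout Succ₂ Fail₂ γ' γ'') :
    Sim red Rin Rout (Relation.Comp Succ₁ Succ₂)
      (fun τ => Fail₁ τ ∨ ∃ τ', Succ₁ τ τ' ∧ Fail₂ τ') γ γ'' := by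
  intro τ σ hin
  refine ⟨?_, ?_⟩
  · rintro τ'' ⟨τ', hs₁, hs₂⟩
    obtain ⟨σ', hred₁, hmid⟩ := (h₁ τ σ hin).1 τ' hs₁
    obtain ⟨σ'', hred₂, hout⟩ := (h₂ τ' σ' hmid).1 τ'' hs₂
    exact ⟨σ'', hred _ _ _ _ _ _ hred₁ hred₂, hout⟩
  · rintro (hf₁ | ⟨τ', hs₁, hf₂⟩)
    · exact (h₁ τ σ hin).2 hf₁
    · obtain ⟨σ', hred₁, hmid⟩ := (h₁ τ σ hin).1 τ' hs₁
      obtain ⟨γf, hredf⟩ := (h₂ τ' σ' hmid).2 hf₂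
      exact ⟨γf, hred _ _ _ _ _ _ hred₁ hredf⟩

theorem comap {Rin Rout : S → B → Prop} {Succ : S → S → Prop} {Fail : S → Prop}
    {Rin' Rout' : S' → B → Prop} {Succ' : S' → S' → Prop} {Fail' : S' → Prop} {γ γ' : P}
    (h : Sim red Rin Rout Succ Fail γ γ') (f : S' → S)
    (hin : ∀ τ σ, Rin' τ σ → Rin (f τ) σ)
    (hsucc : ∀ τ τ', Succ' τ τ' → ∃ υ, Succ (f τ) υ ∧ ∀ σ, Rout υ σ → Rout' τ' σ)
    (hfail : ∀ τ, Fail' τ → Fail (f τ)) :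
    Sim red Rin' Rout' Succ' Fail' γ γ' := by
  intro τ σ hR
  refine ⟨fun τ' hs => ?_, fun hf => (h (f τ) σ (hin τ σ hR)).2 (hfail τ hf)⟩
  obtain ⟨υ, hυ, hout⟩ := hsucc τ τ' hs
  obtain ⟨σ', hred, hRυ⟩ := (h (f τ) σ (hin τ σ hR)).1 υ hυ
  exact ⟨σ', hred, hout σ' hRυ⟩

end Sim

/-- Rule exh-sim: simulation rule for exhale. -/
theorem exh_sim_rule {Var Loc Val B P : Type*}
    (red : P → B → P → Option B → Prop)
    (hred : ExecComposable red)
    (rc : VState Var Loc Val → VState Var Loc Val → Option (VState Var Loc Val) → Prop)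
    (R R'' : VState Var Loc Val → B → Prop)
    (R' : VState Var Loc Val × VState Var Loc Val → B → Prop)
    (γ γ' γ'' : P)
    (h1 : Sim red
      (fun (p : VState Var Loc Val × VState Var Loc Val) σb =>
        p.1 = p.2 ∧ R p.2 σb)
      R'
      (fun p q => p.1 = q.1 ∧ rc p.1 p.2 (some q.2))
      (fun p => rc p.1 p.2 none)
      γ γ')
    (h2 : Sim red
      R'
      (fun (p : VState Var Loc Val × VState Var Loc Val) σb => R'' p.2 σb)
      (fun p q => nonDet p.1 p.2 q.2 ∧ rc p.1 p.1 (some p.2))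
      (fun _ => False)
      γ' γ'') :
    Sim red R R''
      (fun σ σ'' => ∃ σ', rc σ σ (some σ') ∧ nonDet σ σ' σ'')
      (fun σ => rc σ σ none)
      γ γ'' := by
  refine (Sim.comp_s4 hred h1 h2).comap (fun σ => (σ, σ)) (fun _ _ hR => ⟨rfl, hR⟩) ?_
    (fun _ hf => Or.inl hf)
  rintro σ σ'' ⟨σ', hrc, hnd⟩
  exact ⟨(σ, σ''), ⟨(σ, σ'), ⟨rfl, hrc⟩, hnd, hrc⟩, fun _ hR'' => hR''⟩
end
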